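/- arXiv:2006.07079 — 8 statements merged into one kernel-verified Lean document; each statement's English description precedes it below -/
import Mathlib

section
/- The group homomorphism f̄ : H → PSL(2,ℤ) determined by f̄(s) = [A·B] and f̄(t) = [A·B·A], where A = !![1,1; 0,1] and B = !![1,0; -1,1] (so A·B = !![0,1; -1,1] and A·B·A = !![0,1; -1,0]), is well defined and is an isomorphism of groups. -/
/-- `SL(2,ℤ)`: 2×2 integer matrices of determinant 1. -/
abbrev SL2Z := Matrix.SpecialLinearGroup (Fin 2) ℤ

/-- The matrix `A = !![1,1; 0,1]` as an element of `SL(2,ℤ)`. -/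
def MA : SL2Z := ⟨!![1, 1; 0, 1], by norm_num [Matrix.det_fin_two_of]⟩

/-- The matrix `B = !![1,0; -1,1]` as an element of `SL(2,ℤ)`. -/
def MB : SL2Z := ⟨!![1, 0; -1, 1], by norm_num [Matrix.det_fin_two_of]⟩

/-- `PSL(2,ℤ)`: the quotient of `SL(2,ℤ)` by its center `{±1}`. -/
abbrev PSL2Z := SL2Z ⧸ Subgroup.center SL2Z

/-- Relations for the presented group `H = ⟨s, t | s³ = 1, t² = 1⟩`,
with `s` corresponding to `0` and `t` to `1`. -/
def hRels : Set (FreeGroup (Fin 2)) :=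
  { FreeGroup.of 0 ^ 3, FreeGroup.of 1 ^ 2 }

/-- The presented group `H = ⟨s, t | s³ = 1, t² = 1⟩`. -/
abbrev Hgrp := PresentedGroup hRels

/-- The generator `s` of `H`. -/
def hs : Hgrp := PresentedGroup.of 0

/-- The generator `t` of `H`. -/
def ht : Hgrp := PresentedGroup.of 1

/-!
Send `s` and `t` to the classes of `S T⁻¹` and `S`, which have orders `3` and `2` in `PSL(2,ℤ)`
(and `A B = -(S T⁻¹)`, `A B A = -S`). Since `H` is the free product `ℤ/3 * ℤ/2`, injectivity is
the ping-pong lemma for the action on the upper half-plane: `S` maps `{Re z > 0}` into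
`{Re z < 0}`, while `S T⁻¹ : z ↦ -1/(z - 1)` and its inverse `T S⁻¹ : z ↦ 1 - 1/z` map
`{Re z < 0}` into `{Re z > 0}`. Surjectivity holds because `S` and `T` generate `SL(2,ℤ)` and
`[T] = [S T⁻¹]⁻¹ [S]`.
-/

open Matrix MatrixGroups ModularGroup UpperHalfPlane ProjectiveSpecialLinearGroup

lemma pairwise_fin_two_iff {r : Fin 2 → Fin 2 → Prop} : Pairwise r ↔ r 0 1 ∧ r 1 0 := by
  refine ⟨fun h => ⟨h zero_ne_one, h one_ne_zero⟩, fun ⟨h₀₁, h₁₀⟩ i j hij => ?_⟩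
  fin_cases i <;> fin_cases j <;> simp_all

section ZModPowers

variable {G : Type*} [Group G] {n : ℕ}

def zmodPowersHom (g : G) (hg : g ^ n = 1) : Multiplicative (ZMod n) →* G :=
  AddMonoidHom.toMultiplicativeLeft <| ZMod.lift n
    ⟨zmultiplesHom (Additive G) (Additive.ofMul g), by
      rw [zmultiplesHom_apply, natCast_zsmul, ← ofMul_pow, hg, ofMul_one]⟩

lemma zmodPowersHom_ofAdd_intCast (g : G) (hg : g ^ n = 1) (k : ℤ) :
    zmodPowersHom g hg (.ofAdd (k : ZMod n)) = g ^ k := by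
  simp [zmodPowersHom, zmultiplesHom_apply]

lemma zmodPowersHom_ofAdd_one (g : G) (hg : g ^ n = 1) : zmodPowersHom g hg (.ofAdd 1) = g := by
  simpa using zmodPowersHom_ofAdd_intCast g hg 1

/- The order enters as a hypothesis `n = 3` (resp. `n = 2`) so that these lemmas apply to factors
such as `ZMod (pslGenOrder 0)`, which is `ZMod 3` only up to unfolding. -/
lemma zmodPowersHom_eq_or_eq_inv_of_ne_one (g : G) (hg : g ^ n = 1)
    {h : Multiplicative (ZMod n)} (hh : h ≠ 1) (hn : n = 3) :
    zmodPowersHom g hg h = g ∨ zmodPowersHom g hg h = g⁻¹ := by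
  subst hn
  have : h = .ofAdd ((1 : ℤ) : ZMod 3) ∨ h = .ofAdd ((-1 : ℤ) : ZMod 3) := by revert h; decide
  rcases this with rfl | rfl
  · exact .inl <| (zmodPowersHom_ofAdd_intCast g hg 1).trans (zpow_one g)
  · exact .inr <| (zmodPowersHom_ofAdd_intCast g hg (-1)).trans (zpow_neg_one g)

lemma zmodPowersHom_eq_of_ne_one (g : G) (hg : g ^ n = 1)
    {h : Multiplicative (ZMod n)} (hh : h ≠ 1) (hn : n = 2) : zmodPowersHom g hg h = g := by
  subst hn
  obtain rfl : h = .ofAdd 1 := by revert h; decide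
  exact zmodPowersHom_ofAdd_one g hg

end ZModPowers

namespace PresentedGroup

variable {ι : Type*} {n : ι → ℕ} {rels : Set (FreeGroup ι)}
  (hrels : rels = Set.range fun i => FreeGroup.of i ^ n i)

noncomputable def toCoprodICyclic :
    PresentedGroup rels →* Monoid.CoprodI fun i : ι => Multiplicative (ZMod (n i)) :=
  toGroup (f := fun i => Monoid.CoprodI.of (i := i) (.ofAdd 1)) <| by
    rw [hrels]
    rintro _ ⟨i, rfl⟩
    rw [map_pow, FreeGroup.lift_apply_of, ← map_pow, ← ofAdd_nsmul, nsmul_one, ZMod.natCast_self,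
      ofAdd_zero, map_one]

lemma toCoprodICyclic_of (i : ι) :
    toCoprodICyclic hrels (of i) = Monoid.CoprodI.of (i := i) (.ofAdd 1) :=
  toGroup.of _

lemma toCoprodICyclic_injective : Function.Injective (toCoprodICyclic hrels) := by
  have hpow (i : ι) : (of i : PresentedGroup rels) ^ n i = 1 := by
    rw [of, ← map_pow]
    exact one_of_mem (hrels ▸ ⟨i, rfl⟩)
  have hinv : (Monoid.CoprodI.lift fun i => zmodPowersHom _ (hpow i)).comp
      (toCoprodICyclic hrels) = .id _ :=
    ext fun i => by simp [toCoprodICyclic_of, zmodPowersHom_ofAdd_one]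
  exact Function.LeftInverse.injective (DFunLike.congr_fun hinv)

end PresentedGroup

noncomputable instance : MulAction PSL(2, ℤ) ℍ :=
  MulAction.compHom ℍ
    ((ProjGenLinGroup.map (Int.castRingHom ℝ)).comp ProjectiveSpecialLinearGroup.toPGL)

lemma Matrix.ProjectiveSpecialLinearGroup.mk_smul (g : SL(2, ℤ)) (z : ℍ) :
    (QuotientGroup.mk g : PSL(2, ℤ)) • z = g • z := by
  rw [MulAction.compHom_smul_def, MonoidHom.comp_apply, ProjectiveSpecialLinearGroup.toPGL_mk,
    ProjGenLinGroup.map_mk, pglMk_smul, sl_moeb]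
  rfl

lemma Matrix.ProjectiveSpecialLinearGroup.mk_neg {R : Type*} [CommRing R] (g : SL(2, R)) :
    (QuotientGroup.mk (-g) : PSL(2, R)) = QuotientGroup.mk g := by
  have h : (-1 : SL(2, R)) ∈ Subgroup.center SL(2, R) :=
    Subgroup.mem_center_iff.2 fun x => (mul_neg_one x).trans (neg_one_mul x).symm
  rw [← neg_one_mul, QuotientGroup.mk_mul, (QuotientGroup.eq_one_iff _).2 h, one_mul]

lemma ModularGroup.re_S_smul (z : ℍ) : (S • z).re = -z.re / Complex.normSq z := by
  rw [modular_S_smul]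
  simp [Complex.inv_re, neg_div]

lemma ModularGroup.re_S_smul_pos_iff (z : ℍ) : 0 < (S • z).re ↔ z.re < 0 := by
  rw [re_S_smul, div_pos_iff_of_pos_right (Complex.normSq_pos.2 (ne_zero z)), neg_pos]

lemma ModularGroup.re_S_smul_neg_iff (z : ℍ) : (S • z).re < 0 ↔ 0 < z.re := by
  rw [re_S_smul, div_lt_iff₀ (Complex.normSq_pos.2 (ne_zero z)), zero_mul, neg_lt_zero]

abbrev pslGenOrder : Fin 2 → ℕ := ![3, 2]

noncomputable def pslGen : Fin 2 → PSL2Z :=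
  ![QuotientGroup.mk (S * T⁻¹), QuotientGroup.mk S]

lemma pslGen_pow_pslGenOrder : ∀ i, pslGen i ^ pslGenOrder i = 1 := by
  refine Fin.forall_fin_two.2 ⟨?_, ?_⟩
  · show QuotientGroup.mk (S * T⁻¹) ^ 3 = (1 : PSL2Z)
    rw [← QuotientGroup.mk_pow, (by decide : (S * T⁻¹) ^ 3 = 1), QuotientGroup.mk_one]
  · show QuotientGroup.mk S ^ 2 = (1 : PSL2Z)
    rw [← QuotientGroup.mk_pow, (by decide : S ^ 2 = -1), mk_neg, QuotientGroup.mk_one]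

lemma hRels_eq_range : hRels = Set.range fun i => FreeGroup.of i ^ pslGenOrder i := by
  ext r
  simp [hRels, Fin.exists_fin_two, eq_comm]

noncomputable def toPSL : Hgrp →* PSL2Z :=
  (Monoid.CoprodI.lift fun i => zmodPowersHom (pslGen i) (pslGen_pow_pslGenOrder i)).comp
    (PresentedGroup.toCoprodICyclic hRels_eq_range)

lemma toPSL_of (i : Fin 2) : toPSL (PresentedGroup.of i) = pslGen i := by
  rw [toPSL, MonoidHom.comp_apply, PresentedGroup.toCoprodICyclic_of, Monoid.CoprodI.lift_of,
    zmodPowersHom_ofAdd_one]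

def halfPlanes : Fin 2 → Set ℍ := ![{z | 0 < z.re}, {z | z.re < 0}]

lemma pslGen_zero_smul_re_pos {z : ℍ} (hz : z.re < 0) : 0 < (pslGen 0 • z).re := by
  rw [pslGen, Matrix.cons_val_zero, mk_smul, mul_smul, re_S_smul_pos_iff, re_T_inv_smul]
  linarith

lemma pslGen_zero_inv_smul_re_pos {z : ℍ} (hz : z.re < 0) : 0 < ((pslGen 0)⁻¹ • z).re := by
  rw [pslGen, Matrix.cons_val_zero, ← QuotientGroup.mk_inv, mk_smul, _root_.mul_inv_rev, inv_inv,
    mul_smul, S_inv, SL_neg_smul, re_T_smul]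
  linarith [(re_S_smul_pos_iff z).2 hz]

lemma pslGen_one_smul_re_neg {z : ℍ} (hz : 0 < z.re) : (pslGen 1 • z).re < 0 := by
  rw [pslGen, Matrix.cons_val_one, Matrix.cons_val_zero, mk_smul, re_S_smul_neg_iff]
  exact hz

lemma lift_zmodPowersHom_pslGen_injective :
    Function.Injective
      (Monoid.CoprodI.lift fun i => zmodPowersHom (pslGen i) (pslGen_pow_pslGenOrder i)) := by
  refine Monoid.CoprodI.lift_injective_of_ping_pong _ (Or.inr ⟨0, by simp⟩) halfPlanes ?_ ?_ ?_
  · refine Fin.forall_fin_two.2 ⟨⟨T • I, ?_⟩, ⟨T⁻¹ • I, ?_⟩⟩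
    · show 0 < (T • I).re
      simp only [re_T_smul, I_re, zero_add, zero_lt_one]
    · show (T⁻¹ • I).re < 0
      simp only [re_T_inv_smul, I_re, zero_sub, neg_lt_zero, zero_lt_one]
  · refine pairwise_fin_two_iff.2 ⟨?_, ?_⟩ <;>
      exact Set.disjoint_left.2 fun z h₁ h₂ => lt_asymm (α := ℝ) h₁ h₂
  · refine pairwise_fin_two_iff.2 ⟨fun h hh => ?_, fun h hh => ?_⟩
    · rcases zmodPowersHom_eq_or_eq_inv_of_ne_one (pslGen 0) _ hh rfl with he | he <;> rw [he] <;>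
        rintro _ ⟨z, hz, rfl⟩
      exacts [pslGen_zero_smul_re_pos hz, pslGen_zero_inv_smul_re_pos hz]
    · rw [zmodPowersHom_eq_of_ne_one (pslGen 1) _ hh rfl]
      rintro _ ⟨z, hz, rfl⟩
      exact pslGen_one_smul_re_neg hz

lemma toPSL_injective : Function.Injective toPSL :=
  lift_zmodPowersHom_pslGen_injective.comp (PresentedGroup.toCoprodICyclic_injective _)

lemma toPSL_surjective : Function.Surjective toPSL := by
  have hS : QuotientGroup.mk S = toPSL ht := (toPSL_of 1).symm
  have hT : QuotientGroup.mk T = toPSL (hs⁻¹ * ht) := by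
    rw [map_mul, map_inv, hs, ht, toPSL_of, toPSL_of, (by group : T = (S * T⁻¹)⁻¹ * S)]
    rfl
  have hgen : (⊤ : Subgroup SL(2, ℤ)) ≤ toPSL.range.comap (QuotientGroup.mk' _) := by
    rw [← SpecialLinearGroup.SL2Z_generators, Subgroup.closure_le, Set.insert_subset_iff,
      Set.singleton_subset_iff]
    exact ⟨⟨ht, hS.symm⟩, ⟨hs⁻¹ * ht, hT.symm⟩⟩
  intro x
  obtain ⟨g, rfl⟩ := QuotientGroup.mk'_surjective _ x
  exact hgen (Subgroup.mem_top g)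

lemma MA_mul_MB : MA * MB = -(S * T⁻¹) := by decide

lemma MA_mul_MB_mul_MA : MA * MB * MA = -S := by decide

theorem stmt2 :
    ∃ f : Hgrp ≃* PSL2Z,
      f hs = (QuotientGroup.mk (MA * MB) : PSL2Z) ∧
      f ht = (QuotientGroup.mk (MA * MB * MA) : PSL2Z) := by
  refine ⟨.ofBijective toPSL ⟨toPSL_injective, toPSL_surjective⟩,
    (toPSL_of 0).trans ?_, (toPSL_of 1).trans ?_⟩
  · rw [MA_mul_MB, mk_neg]
    rfl
  · rw [MA_mul_MB_mul_MA, mk_neg]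
    rfl
end

section
/- In the group M04, the elements a = σ1σ3⁻¹ and b = σ2σ1σ3⁻¹σ2⁻¹ satisfy a² = 1, b² = 1, and ab = ba. -/
/-- Relations for the presented group
`M04 = ⟨σ1, σ2, σ3 | σ1σ3 = σ3σ1, σ1σ2σ1 = σ2σ1σ2, σ3σ2σ3 = σ2σ3σ2,
(σ1σ2σ3)⁴ = 1, σ1σ2σ3²σ2σ1 = 1⟩`, a presentation of the mapping class group of
the 4-punctured sphere, with `σ1, σ2, σ3` corresponding to `0, 1, 2`. -/
def m4Rels : Set (FreeGroup (Fin 3)) :=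
  { FreeGroup.of 0 * FreeGroup.of 2 * (FreeGroup.of 2 * FreeGroup.of 0)⁻¹,
    FreeGroup.of 0 * FreeGroup.of 1 * FreeGroup.of 0 *
      (FreeGroup.of 1 * FreeGroup.of 0 * FreeGroup.of 1)⁻¹,
    FreeGroup.of 2 * FreeGroup.of 1 * FreeGroup.of 2 *
      (FreeGroup.of 1 * FreeGroup.of 2 * FreeGroup.of 1)⁻¹,
    (FreeGroup.of 0 * FreeGroup.of 1 * FreeGroup.of 2) ^ 4,
    FreeGroup.of 0 * FreeGroup.of 1 * FreeGroup.of 2 ^ 2 * FreeGroup.of 1 * FreeGroup.of 0 }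

/-- The mapping class group of the 4-punctured sphere, by its presentation. -/
abbrev M04 := PresentedGroup m4Rels

/-- The generator `σ1` of `M04`. -/
def m4s1 : M04 := PresentedGroup.of 0

/-- The generator `σ2` of `M04`. -/
def m4s2 : M04 := PresentedGroup.of 1

/-- The generator `σ3` of `M04`. -/
def m4s3 : M04 := PresentedGroup.of 2

/-- The element `a = σ1σ3⁻¹` of `M04`. -/
def ea : M04 := m4s1 * m4s3⁻¹

/-- The element `b = σ2σ1σ3⁻¹σ2⁻¹` of `M04`. -/
def eb : M04 := m4s2 * m4s1 * m4s3⁻¹ * m4s2⁻¹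

/-- The subgroup `N` of `M04` generated by `a` and `b`. -/
def Nsub : Subgroup M04 := Subgroup.closure {ea, eb}

/-- The subgroup `G` of `M04` generated by `σ1` and `σ2`. -/
def Gsub : Subgroup M04 := Subgroup.closure {m4s1, m4s2}

/-! Put `a = σ1σ3⁻¹`, `p = σ1σ2²`, `q = σ3σ2²`, so that `a = pq⁻¹`. The last relation says that
`σ3σ2σ1` is the inverse of `δ = σ1σ2σ3`, so `δ⁴ = 1` gives `δ² = (σ3σ2σ1)²`, which the braid
relations turn into `pq = qp`. The braid relations and the last relation also give `p² = a²` and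
`q² = a⁻²`, hence `a² = p²q⁻² = a⁴` and `a² = 1`. Then `b = σ2aσ2⁻¹` is an involution as well, and
conjugation by `b` swaps `σ1` and `σ3`, so it sends `a` to `a⁻¹ = a`. -/

section BraidRelations

variable {G : Type*} [Group G] {x y z : G}

theorem mul_sq_sq_of_braid (h : x * y * x = y * x * y) :
    (x * y ^ 2) ^ 2 = x ^ 2 * (y * x ^ 2 * y) := by
  simp only [sq]
  calc x * (y * y) * (x * (y * y)) = x * y * (y * x * y) * y := by group
    _ = x * y * (x * y * x) * y := by rw [h]
    _ = x * (y * x * y) * x * y := by group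
    _ = x * (x * y * x) * x * y := by rw [h]
    _ = x * x * (y * (x * x) * y) := by group

theorem mul_mul_sq_of_braid (h1 : Commute x z) (h2 : x * y * x = y * x * y)
    (h3 : z * y * z = y * z * y) : (x * y * z) ^ 2 = y * (x * y ^ 2 * z) * y := by
  simp only [sq]
  calc x * y * z * (x * y * z) = x * y * (z * x) * y * z := by group
    _ = (x * y * x) * (z * y * z) := by rw [← h1.eq]; group
    _ = y * (x * (y * y) * z) * y := by rw [h2, h3]; group

theorem semiconjBy_of_braid (h2 : x * y * x = y * x * y) (h3 : z * y * z = y * z * y) :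
    SemiconjBy (y * x * z⁻¹ * y⁻¹) z x :=
  calc y * x * z⁻¹ * y⁻¹ * z = y * x * y * (y * z * y)⁻¹ * z := by group
    _ = y * x * y * (z * y * z)⁻¹ * z := by rw [h3]
    _ = x * y * x * z⁻¹ * y⁻¹ := by rw [h2]; group
    _ = x * (y * x * z⁻¹ * y⁻¹) := by group

theorem mul_sq_mul_symm_eq_one (h : x * y * z ^ 2 * y * x = 1) : z * y * x ^ 2 * y * z = 1 := by
  rw [sq] at h ⊢
  have h' : (x * y * z) * (z * y * x) = 1 := by rw [← h]; group
  calc z * y * (x * x) * y * z = (z * y * x) * (x * y * z) := by group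
    _ = 1 := mul_eq_one_comm.mp h'

theorem mul_sq_mul_eq_inv (h : x * y * z ^ 2 * y * x = 1) : y * z ^ 2 * y = (x ^ 2)⁻¹ := by
  rw [eq_inv_iff_mul_eq_one, sq x]
  calc y * z ^ 2 * y * (x * x) = x⁻¹ * (x * y * z ^ 2 * y * x) * x := by group
    _ = 1 := by rw [h]; group

theorem commute_mul_sq_of_relations (h1 : Commute x z) (h2 : x * y * x = y * x * y)
    (h3 : z * y * z = y * z * y) (h4 : (x * y * z) ^ 4 = 1) (h5 : x * y * z ^ 2 * y * x = 1) :
    Commute (x * y ^ 2) (z * y ^ 2) := by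
  have hinv : (x * y * z)⁻¹ = z * y * x := by
    rw [inv_eq_iff_mul_eq_one, ← h5]; simp only [sq]; group
  have hsq : (x * y * z) ^ 2 = (z * y * x) ^ 2 := by
    rw [← hinv, inv_pow, eq_inv_iff_mul_eq_one, ← pow_add]
    exact h4
  rw [mul_mul_sq_of_braid h1 h2 h3, mul_mul_sq_of_braid h1.symm h3 h2] at hsq
  have key : x * y ^ 2 * z = z * y ^ 2 * x := mul_left_cancel (mul_right_cancel hsq)
  calc x * y ^ 2 * (z * y ^ 2) = x * y ^ 2 * z * y ^ 2 := by group
    _ = z * y ^ 2 * x * y ^ 2 := by rw [key]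
    _ = z * y ^ 2 * (x * y ^ 2) := by group

theorem sq_mul_inv_eq_one_of_relations (h1 : Commute x z) (h2 : x * y * x = y * x * y)
    (h3 : z * y * z = y * z * y) (h4 : (x * y * z) ^ 4 = 1) (h5 : x * y * z ^ 2 * y * x = 1) :
    (x * z⁻¹) ^ 2 = 1 := by
  have hp : (x * y ^ 2) ^ 2 = (x * z⁻¹) ^ 2 := by
    rw [mul_sq_sq_of_braid h2, mul_sq_mul_eq_inv (mul_sq_mul_symm_eq_one h5),
      h1.inv_right.mul_pow, inv_pow]
  have hq : (z * y ^ 2) ^ 2 = ((x * z⁻¹) ^ 2)⁻¹ := by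
    rw [mul_sq_sq_of_braid h3, mul_sq_mul_eq_inv h5, ← inv_pow (x * z⁻¹), mul_inv_rev, inv_inv,
      h1.symm.inv_right.mul_pow, inv_pow]
  have ha : x * z⁻¹ = x * y ^ 2 * (z * y ^ 2)⁻¹ := by group
  have : (x * z⁻¹) ^ 2 = (x * z⁻¹) ^ 2 * (x * z⁻¹) ^ 2 := by
    nth_rw 1 [ha]
    rw [(commute_mul_sq_of_relations h1 h2 h3 h4 h5).inv_right.mul_pow, inv_pow, hp, hq, inv_inv]
  exact left_eq_mul.mp this

theorem commute_of_semiconjBy_of_sq_eq_one {b : G} (hb : b ^ 2 = 1) (h : SemiconjBy b z x)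
    (ha : (x * z⁻¹) ^ 2 = 1) : Commute (x * z⁻¹) b := by
  have hb' : b⁻¹ = b := inv_eq_of_mul_eq_one_right (by rw [← sq, hb])
  have ha' : z * x⁻¹ = x * z⁻¹ :=
    calc z * x⁻¹ = (x * z⁻¹)⁻¹ := by rw [mul_inv_rev, inv_inv]
      _ = x * z⁻¹ := inv_eq_of_mul_eq_one_right (by rw [← sq, ha])
  have hx : SemiconjBy b x z := hb' ▸ h.inv_symm_left
  exact (ha' ▸ hx.mul_right h.inv_right).symm

theorem involutions_of_relations (h1 : Commute x z) (h2 : x * y * x = y * x * y)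
    (h3 : z * y * z = y * z * y) (h4 : (x * y * z) ^ 4 = 1) (h5 : x * y * z ^ 2 * y * x = 1) :
    (x * z⁻¹) ^ 2 = 1 ∧ (y * x * z⁻¹ * y⁻¹) ^ 2 = 1 ∧
      Commute (x * z⁻¹) (y * x * z⁻¹ * y⁻¹) := by
  have ha := sq_mul_inv_eq_one_of_relations h1 h2 h3 h4 h5
  have hb : (y * x * z⁻¹ * y⁻¹) ^ 2 = 1 := by
    rw [mul_assoc y, conj_pow, ha, mul_one, mul_inv_cancel]
  exact ⟨ha, hb, commute_of_semiconjBy_of_sq_eq_one hb (semiconjBy_of_braid h2 h3) ha⟩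

end BraidRelations

theorem m4_relations : Commute m4s1 m4s3 ∧ m4s1 * m4s2 * m4s1 = m4s2 * m4s1 * m4s2 ∧
    m4s3 * m4s2 * m4s3 = m4s2 * m4s3 * m4s2 ∧ (m4s1 * m4s2 * m4s3) ^ 4 = 1 ∧
    m4s1 * m4s2 * m4s3 ^ 2 * m4s2 * m4s1 = 1 :=
  ⟨PresentedGroup.mk_eq_mk_of_mul_inv_mem (by simp [m4Rels]),
    PresentedGroup.mk_eq_mk_of_mul_inv_mem (by simp [m4Rels]),
    PresentedGroup.mk_eq_mk_of_mul_inv_mem (by simp [m4Rels]),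
    PresentedGroup.one_of_mem (by simp [m4Rels]),
    PresentedGroup.one_of_mem (by simp [m4Rels])⟩

theorem stmt6 : ea ^ 2 = 1 ∧ eb ^ 2 = 1 ∧ ea * eb = eb * ea := by
  obtain ⟨h1, h2, h3, h4, h5⟩ := m4_relations
  exact involutions_of_relations h1 h2 h3 h4 h5
end

section
/- The group M04 is the internal semidirect product of the normal subgroup N and the subgroup G: the subgroup N is normal in M04, N ∩ G = {1}, and every element of M04 is a product of an element of N and an element of G. -/
/-!
Put `ρ = σ₁σ₂σ₃`. The relations say that `ρ⁴ = 1`, `ρ⁻¹ = σ₃σ₂σ₁` and that conjugation by `ρ`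
sends `σ₁ ↦ σ₂ ↦ σ₃`. From this one computes `σ₂ρ²σ₂⁻¹ = a` and `ρ² = b`, so `a` and `b` are
commuting involutions and `N = {1, a, b, ab}`; conjugation by `σ₁` and `σ₂` permutes `a, b, ab`,
so `N` is normalised by `N` and by `G`, which together generate `M04` because `σ₃ = a⁻¹σ₁`.
For `N ∩ G = 1`, map `M04` to `S₄` by `σᵢ ↦ (i i+1)`: `G` fixes the last point, which `a`, `b`
and `ab` all move.
-/

namespace Subgroup

variable {G : Type*} [Group G]

theorem mem_normalizer_closure_of_semiconjBy {s : Set G} {g : G}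
    (h : ∀ x ∈ s, ∃ y ∈ closure s, SemiconjBy g x y)
    (h' : ∀ x ∈ s, ∃ y ∈ closure s, SemiconjBy g y x) :
    g ∈ normalizer (closure s : Set G) := by
  have conj_mem : ∀ k : G, (∀ x ∈ s, ∃ y ∈ closure s, SemiconjBy k x y) →
      ∀ y ∈ closure s, k * y * k⁻¹ ∈ closure s := by
    refine fun k hk _ hy ↦ (closure_le ((closure s).comap (MulAut.conj k).toMonoidHom)).2 ?_ hy
    intro x hx
    obtain ⟨y, hy, hxy⟩ := hk x hx
    simpa [mul_inv_eq_of_eq_mul hxy.eq] using hy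
  refine mem_normalizer_iff.2 fun y ↦ ⟨conj_mem g h y, fun hy ↦ ?_⟩
  have h'' : ∀ x ∈ s, ∃ y ∈ closure s, SemiconjBy g⁻¹ x y := fun x hx ↦
    (h' x hx).imp fun _ ⟨hy, hyx⟩ ↦ ⟨hy, hyx.inv_symm_left⟩
  simpa [mul_assoc] using conj_mem g⁻¹ h'' _ hy

theorem closure_pair_subset_of_sq_eq_one {a b : G} (ha : a ^ 2 = 1) (hb : b ^ 2 = 1)
    (hab : Commute a b) : (closure {a, b} : Set G) ⊆ {1, a, b, a * b} := by
  rw [sq] at ha hb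
  have ha' : a⁻¹ = a := inv_eq_of_mul_eq_one_right ha
  have hb' : b⁻¹ = b := inv_eq_of_mul_eq_one_right hb
  have hba : b * a = a * b := hab.eq.symm
  have habb : a * b * b = a := by rw [mul_assoc, hb, mul_one]
  intro x hx
  induction hx using closure_induction_left with
  | one => exact .inl rfl
  | mul_left z hz y _ ih | inv_mul_cancel z hz y _ ih =>
    rcases hz with rfl | rfl <;> rcases ih with rfl | rfl | rfl | rfl <;>
      simp [← mul_assoc, ha, ha', hb, hb', hba, habb]

end Subgroup

local notation "σ₁" => m4s1
local notation "σ₂" => m4s2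
local notation "σ₃" => m4s3

def m4rot : M04 := σ₁ * σ₂ * σ₃

namespace M04

theorem m4s1_commute_m4s3 : Commute σ₁ σ₃ :=
  mul_inv_eq_one.1 <| PresentedGroup.one_of_mem (by simp [m4Rels])

theorem m4s1_braid_m4s2 : σ₁ * σ₂ * σ₁ = σ₂ * σ₁ * σ₂ :=
  mul_inv_eq_one.1 <| PresentedGroup.one_of_mem (by simp [m4Rels])

theorem m4s3_braid_m4s2 : σ₃ * σ₂ * σ₃ = σ₂ * σ₃ * σ₂ :=
  mul_inv_eq_one.1 <| PresentedGroup.one_of_mem (by simp [m4Rels])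

theorem m4rot_pow_four : m4rot ^ 4 = 1 :=
  PresentedGroup.one_of_mem (by simp [m4Rels])

theorem m4rot_inv : m4rot⁻¹ = σ₃ * σ₂ * σ₁ := by
  refine inv_eq_of_mul_eq_one_right ?_
  have h : σ₁ * σ₂ * σ₃ ^ 2 * σ₂ * σ₁ = 1 := PresentedGroup.one_of_mem (by simp [m4Rels])
  simpa [m4rot, pow_two, mul_assoc] using h

theorem semiconjBy_m4rot_m4s1 : SemiconjBy m4rot σ₁ σ₂ :=
  calc m4rot * σ₁ = σ₁ * σ₂ * (σ₃ * σ₁) := by simp only [m4rot, mul_assoc]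
  _ = σ₁ * σ₂ * σ₁ * σ₃ := by rw [← m4s1_commute_m4s3.eq, ← mul_assoc]
  _ = σ₂ * m4rot := by rw [m4s1_braid_m4s2]; simp only [m4rot, mul_assoc]

theorem semiconjBy_m4rot_m4s2 : SemiconjBy m4rot σ₂ σ₃ :=
  calc m4rot * σ₂ = σ₁ * (σ₂ * σ₃ * σ₂) := by simp only [m4rot, mul_assoc]
  _ = σ₁ * σ₃ * (σ₂ * σ₃) := by rw [← m4s3_braid_m4s2]; simp only [mul_assoc]
  _ = σ₃ * m4rot := by rw [m4s1_commute_m4s3.eq]; simp only [m4rot, mul_assoc]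

theorem semiconjBy_m4s2_m4rot_sq : SemiconjBy σ₂ (m4rot ^ 2) ea := by
  rw [SemiconjBy, ← mul_inv_eq_iff_eq_mul]
  have h : m4rot ^ 2 = m4rot * (σ₃ * σ₂ * σ₁)⁻¹ := by rw [← m4rot_inv, inv_inv, pow_two]
  calc σ₂ * m4rot ^ 2 * σ₂⁻¹
      = (σ₂ * σ₁ * σ₂) * (σ₃ * σ₁⁻¹) * (σ₂ * σ₃ * σ₂)⁻¹ := by rw [h, m4rot]; group
    _ = σ₁ * σ₂ * (σ₁ * σ₃ * σ₁⁻¹) * (σ₃ * σ₂ * σ₃)⁻¹ := by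
        rw [← m4s1_braid_m4s2, ← m4s3_braid_m4s2]; group
    _ = ea := by rw [m4s1_commute_m4s3.mul_inv_cancel, ea]; group

theorem semiconjBy_m4s2_ea : SemiconjBy σ₂ ea eb := by
  simp [SemiconjBy, ea, eb, mul_assoc]

theorem ea_sq : ea ^ 2 = 1 :=
  (semiconjBy_m4s2_m4rot_sq.pow_right 2).eq_one_iff.1 (by rw [← pow_mul, m4rot_pow_four])

theorem m4s1_sq_eq_m4s3_sq : σ₁ ^ 2 = σ₃ ^ 2 := by
  have h : σ₁ ^ 2 * σ₃⁻¹ ^ 2 = 1 := by rw [← m4s1_commute_m4s3.inv_right.mul_pow, ← ea, ea_sq]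
  rwa [mul_eq_one_iff_eq_inv, inv_pow, inv_inv] at h

theorem commute_m4s2_sq_m4rot_sq : Commute (σ₂ ^ 2) (m4rot ^ 2) := by
  have h₁ := semiconjBy_m4rot_m4s1.pow_right 2
  have h₂ := semiconjBy_m4rot_m4s2.pow_right 2
  rw [← m4s1_sq_eq_m4s3_sq] at h₂
  exact (pow_two m4rot ▸ h₁.mul_left h₂).symm

theorem eb_eq_m4rot_sq : eb = m4rot ^ 2 := by
  have h := semiconjBy_m4s2_ea.mul_left semiconjBy_m4s2_m4rot_sq
  rw [← sq] at h
  exact mul_right_cancel (h.eq.symm.trans commute_m4s2_sq_m4rot_sq.eq)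

theorem semiconjBy_m4s2_eb : SemiconjBy σ₂ eb ea :=
  eb_eq_m4rot_sq ▸ semiconjBy_m4s2_m4rot_sq

theorem eb_sq : eb ^ 2 = 1 := by
  rw [eb_eq_m4rot_sq, ← pow_mul, m4rot_pow_four]

theorem semiconjBy_eb_m4s1 : SemiconjBy eb σ₁ σ₃ :=
  eb_eq_m4rot_sq ▸ pow_two m4rot ▸ semiconjBy_m4rot_m4s2.mul_left semiconjBy_m4rot_m4s1

theorem commute_ea_eb : Commute ea eb := by
  have hea : ea⁻¹ = ea := inv_eq_of_mul_eq_one_right (sq ea ▸ ea_sq)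
  have heb : eb⁻¹ = eb := inv_eq_of_mul_eq_one_right (sq eb ▸ eb_sq)
  have h₃ : SemiconjBy eb σ₃ σ₁ := heb ▸ semiconjBy_eb_m4s1.inv_symm_left
  have h : SemiconjBy eb ea ea⁻¹ := by
    rw [ea, mul_inv_rev, inv_inv]
    exact semiconjBy_eb_m4s1.mul_right h₃.inv_right
  rw [hea] at h
  exact h.eq.symm

theorem commute_m4s1_ea : Commute σ₁ ea :=
  (Commute.refl σ₁).mul_right m4s1_commute_m4s3.inv_right

theorem semiconjBy_m4s1_eb : SemiconjBy σ₁ eb (ea * eb) := by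
  rw [SemiconjBy, mul_assoc ea, semiconjBy_eb_m4s1.eq, ea]
  group

theorem ea_mem_Nsub : ea ∈ Nsub := Subgroup.subset_closure (Set.mem_insert _ _)

theorem eb_mem_Nsub : eb ∈ Nsub := Subgroup.subset_closure (Set.mem_insert_of_mem _ rfl)

theorem m4s1_mem_normalizer : σ₁ ∈ Subgroup.normalizer (Nsub : Set M04) := by
  have hσ₁ : SemiconjBy σ₁ (ea * eb) eb := by
    simpa [← mul_assoc, ← sq, ea_sq] using SemiconjBy.mul_right commute_m4s1_ea semiconjBy_m4s1_eb
  have hab : ea * eb ∈ Nsub := Nsub.mul_mem ea_mem_Nsub eb_mem_Nsub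
  refine Subgroup.mem_normalizer_closure_of_semiconjBy ?_ ?_ <;> rintro _ (rfl | rfl)
  exacts [⟨_, ea_mem_Nsub, commute_m4s1_ea⟩, ⟨_, hab, semiconjBy_m4s1_eb⟩,
    ⟨_, ea_mem_Nsub, commute_m4s1_ea⟩, ⟨_, hab, hσ₁⟩]

theorem m4s2_mem_normalizer : σ₂ ∈ Subgroup.normalizer (Nsub : Set M04) := by
  refine Subgroup.mem_normalizer_closure_of_semiconjBy ?_ ?_ <;> rintro _ (rfl | rfl)
  exacts [⟨_, eb_mem_Nsub, semiconjBy_m4s2_ea⟩, ⟨_, ea_mem_Nsub, semiconjBy_m4s2_eb⟩,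
    ⟨_, eb_mem_Nsub, semiconjBy_m4s2_eb⟩, ⟨_, ea_mem_Nsub, semiconjBy_m4s2_ea⟩]

theorem Gsub_le_normalizer : Gsub ≤ Subgroup.normalizer (Nsub : Set M04) :=
  (Subgroup.closure_le _).2 <| by
    rintro _ (rfl | rfl)
    exacts [m4s1_mem_normalizer, m4s2_mem_normalizer]

theorem Nsub_sup_Gsub : Nsub ⊔ Gsub = ⊤ := by
  rw [eq_top_iff, ← PresentedGroup.closure_range_of, Subgroup.closure_le]
  have hσ₁ : σ₁ ∈ Gsub := Subgroup.subset_closure (Set.mem_insert _ _)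
  have hσ₂ : σ₂ ∈ Gsub := Subgroup.subset_closure (Set.mem_insert_of_mem _ rfl)
  have hσ₃ : σ₃ = ea⁻¹ * σ₁ := by rw [ea]; group
  rintro _ ⟨i, rfl⟩
  fin_cases i
  · exact Subgroup.mem_sup_right hσ₁
  · exact Subgroup.mem_sup_right hσ₂
  · show σ₃ ∈ Nsub ⊔ Gsub
    exact hσ₃ ▸ Subgroup.mul_mem_sup (Nsub.inv_mem ea_mem_Nsub) hσ₁

theorem Nsub_normal : Nsub.Normal := by
  rw [← Subgroup.normalizer_eq_top_iff, eq_top_iff, ← Nsub_sup_Gsub]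
  exact sup_le Subgroup.le_normalizer Gsub_le_normalizer

def toPerm : M04 →* Equiv.Perm (Fin 4) :=
  PresentedGroup.toGroup (f := fun i ↦ Equiv.swap i.castSucc i.succ) <| by
    intro r hr
    simp only [m4Rels, Set.mem_insert_iff, Set.mem_singleton_iff] at hr
    rcases hr with rfl | rfl | rfl | rfl | rfl <;>
      simp only [map_mul, map_inv, map_pow, FreeGroup.lift_apply_of] <;> decide

theorem toPerm_of (i : Fin 3) : toPerm (PresentedGroup.of i) = Equiv.swap i.castSucc i.succ :=
  PresentedGroup.toGroup.of _

theorem Gsub_le_comap_stabilizer :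
    Gsub ≤ (MulAction.stabilizer (Equiv.Perm (Fin 4)) (Fin.last 3)).comap toPerm :=
  (Subgroup.closure_le _).2 <| by
    rintro _ (rfl | rfl) <;>
      simp only [Subgroup.coe_comap, Set.mem_preimage, SetLike.mem_coe,
        MulAction.mem_stabilizer_iff, Equiv.Perm.smul_def, m4s1, m4s2, toPerm_of] <;> decide

theorem Nsub_inf_Gsub : Nsub ⊓ Gsub = ⊥ := by
  refine eq_bot_iff.2 fun x ⟨hxN, hxG⟩ ↦ ?_
  have hfix : toPerm x (Fin.last 3) = Fin.last 3 := Gsub_le_comap_stabilizer hxG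
  rcases Subgroup.closure_pair_subset_of_sq_eq_one ea_sq eb_sq commute_ea_eb hxN with
    rfl | rfl | rfl | rfl
  · exact Subgroup.one_mem _
  all_goals
    refine absurd hfix ?_
    simp only [ea, eb, m4s1, m4s2, m4s3, map_mul, map_inv, toPerm_of]
    decide

end M04

theorem stmt7 :
    Nsub.Normal ∧ Nsub ⊓ Gsub = ⊥ ∧
    ∀ x : M04, ∃ n ∈ Nsub, ∃ g ∈ Gsub, x = n * g := by
  have hN := M04.Nsub_normal
  refine ⟨hN, M04.Nsub_inf_Gsub, fun x ↦ ?_⟩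
  obtain ⟨n, hn, g, hg, rfl⟩ :=
    Subgroup.mem_sup_of_normal_left.1 (M04.Nsub_sup_Gsub ▸ Subgroup.mem_top x)
  exact ⟨n, hn, g, hg, rfl⟩
end

section
/- For every A ∈ ℂ with A ≠ 0 and A² ≠ 1, the matrices QS(A) and QT(A) satisfy QS(A)³ = −1 and QT(A)² = −1 (where 1 denotes the 2×2 identity matrix). -/
/-- The matrix `QS(A) = (A² − 1)⁻¹ · !![−1, −A²; (A² − 1)²/A² + 1, A²]`. -/
noncomputable def QS (A : ℂ) : Matrix (Fin 2) (Fin 2) ℂ :=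
  (A ^ 2 - 1)⁻¹ • !![-1, -A ^ 2; (A ^ 2 - 1) ^ 2 / A ^ 2 + 1, A ^ 2]

/-- The matrix `QT(A) = (A² − 1)⁻¹ · !![−A, −A; (A² − 1)²/A + A, A]`. -/
noncomputable def QT (A : ℂ) : Matrix (Fin 2) (Fin 2) ℂ :=
  (A ^ 2 - 1)⁻¹ • !![-A, -A; (A ^ 2 - 1) ^ 2 / A + A, A]

/-!
By Cayley–Hamilton a `2 × 2` matrix `M` with determinant `1` satisfies `M² = (tr M) M - 1`, so
`M² = -1` when `tr M = 0`, and `M³ = M² - M = -1` when `tr M = 1`. The unscaled matrices in `QS A`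
and `QT A` have determinant `(A² - 1)²` and traces `A² - 1` and `0`.
-/

namespace Matrix

variable {R : Type*} [CommRing R] [Nontrivial R]

theorem sq_fin_two_eq_trace_smul_sub_det_smul (M : Matrix (Fin 2) (Fin 2) R) :
    M ^ 2 = M.trace • M - M.det • 1 := by
  have h := M.aeval_self_charpoly
  rw [charpoly_fin_two] at h
  simp only [map_add, map_sub, map_mul, map_pow, Polynomial.aeval_X, Polynomial.aeval_C,
    Algebra.algebraMap_eq_smul_one, smul_mul_assoc, one_mul] at h
  rw [← sub_eq_zero, ← h]
  abel

theorem sq_eq_neg_one_of_trace_eq_zero_of_det_eq_one {M : Matrix (Fin 2) (Fin 2) R}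
    (htr : M.trace = 0) (hdet : M.det = 1) : M ^ 2 = -1 := by
  rw [sq_fin_two_eq_trace_smul_sub_det_smul, htr, hdet, zero_smul, one_smul, zero_sub]

theorem pow_three_eq_neg_one_of_trace_eq_one_of_det_eq_one {M : Matrix (Fin 2) (Fin 2) R}
    (htr : M.trace = 1) (hdet : M.det = 1) : M ^ 3 = -1 := by
  have hsq : M ^ 2 = M - 1 := by
    rw [sq_fin_two_eq_trace_smul_sub_det_smul, htr, hdet, one_smul, one_smul]
  rw [pow_succ, hsq, sub_mul, ← sq, hsq, one_mul, sub_sub_cancel_left]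

end Matrix

open Matrix

theorem trace_QS {A : ℂ} (h1 : A ^ 2 ≠ 1) : (QS A).trace = 1 := by
  rw [QS, trace_smul, trace_fin_two_of, smul_eq_mul, neg_add_eq_sub,
    inv_mul_cancel₀ (sub_ne_zero.mpr h1)]

theorem det_QS {A : ℂ} (h0 : A ≠ 0) (h1 : A ^ 2 ≠ 1) : (QS A).det = 1 := by
  have hA : A ^ 2 - 1 ≠ 0 := sub_ne_zero.mpr h1
  rw [QS, det_smul, det_fin_two_of, Fintype.card_fin]
  field_simp
  ring

theorem trace_QT (A : ℂ) : (QT A).trace = 0 := by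
  rw [QT, trace_smul, trace_fin_two_of, neg_add_cancel, smul_zero]

theorem det_QT {A : ℂ} (h0 : A ≠ 0) (h1 : A ^ 2 ≠ 1) : (QT A).det = 1 := by
  have hA : A ^ 2 - 1 ≠ 0 := sub_ne_zero.mpr h1
  rw [QT, det_smul, det_fin_two_of, Fintype.card_fin]
  field_simp
  ring

theorem stmt11 (A : ℂ) (h0 : A ≠ 0) (h1 : A ^ 2 ≠ 1) :
    QS A ^ 3 = -1 ∧ QT A ^ 2 = -1 :=
  ⟨pow_three_eq_neg_one_of_trace_eq_one_of_det_eq_one (trace_QS h1) (det_QS h0 h1),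
    sq_eq_neg_one_of_trace_eq_zero_of_det_eq_one (trace_QT A) (det_QT h0 h1)⟩
end

section
/- The group homomorphism ρ : H → PGL(2,ℂ) determined by ρ(s) = [!![0, 1; −1, 1]] and ρ(t) = [!![0, 1; −1, 0]] is well defined (since !![0, 1; −1, 1]³ = −1 and !![0, 1; −1, 0]² = −1) and injective. -/
/-- `PGL(2,ℂ)`: the quotient of `GL(2,ℂ)` by its center (nonzero scalar matrices). -/
abbrev PGL2 := GL (Fin 2) ℂ ⧸ Subgroup.center (GL (Fin 2) ℂ)

/-- The matrix `!![0, 1; −1, 0]` as an element of `GL(2,ℂ)`. -/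
noncomputable def Mt0 : GL (Fin 2) ℂ :=
  Matrix.GeneralLinearGroup.mkOfDetNeZero !![0, 1; -1, 0]
    (by norm_num [Matrix.det_fin_two_of])

/-- The matrix `!![0, 1; −1, 1]` as an element of `GL(2,ℂ)`. -/
noncomputable def Ms0 : GL (Fin 2) ℂ :=
  Matrix.GeneralLinearGroup.mkOfDetNeZero !![0, 1; -1, 1]
    (by norm_num [Matrix.det_fin_two_of])

open Monoid

section ZModPow

variable {G : Type*} [Group G] {n : ℕ}

lemma ofAdd_one_pow_self : (Multiplicative.ofAdd (1 : ZMod n)) ^ n = 1 := by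
  rw [← ofAdd_nsmul, nsmul_one, ZMod.natCast_self, ofAdd_zero]

variable [NeZero n]

def zmodPowHom (g : G) (hg : g ^ n = 1) : Multiplicative (ZMod n) →* G :=
  MonoidHom.mk' (fun x => g ^ x.toAdd.val) fun a b => by
    simp only [toAdd_mul, ZMod.val_add, ← pow_add, ← pow_eq_pow_mod _ hg]

lemma zmodPowHom_apply (g : G) (hg : g ^ n = 1) (x : Multiplicative (ZMod n)) :
    zmodPowHom g hg x = g ^ x.toAdd.val := rfl

lemma zmodPowHom_ofAdd_one (g : G) (hg : g ^ n = 1) :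
    zmodPowHom g hg (.ofAdd 1) = g := by
  rw [zmodPowHom_apply, toAdd_ofAdd, ZMod.val_one_eq_one_mod, ← pow_eq_pow_mod _ hg, pow_one]

lemma exists_zmodPowHom_eq_pow_of_ne_one (g : G) (hg : g ^ n = 1)
    {x : Multiplicative (ZMod n)} (hx : x ≠ 1) :
    ∃ k, 0 < k ∧ k < n ∧ zmodPowHom g hg x = g ^ k :=
  ⟨x.toAdd.val, Nat.pos_of_ne_zero ((ZMod.val_ne_zero _).mpr hx), ZMod.val_lt _, rfl⟩

end ZModPow

section CyclicCoprod

variable {ι : Type*} (n : ι → ℕ) {rels : Set (FreeGroup ι)}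

abbrev CyclicCoprod := CoprodI fun i => Multiplicative (ZMod (n i))

def CyclicCoprod.gen (i : ι) : CyclicCoprod n :=
  CoprodI.of (M := fun i => Multiplicative (ZMod (n i))) (i := i) (.ofAdd 1)

def PresentedGroup.toCyclicCoprod (h : rels = Set.range fun i => FreeGroup.of i ^ n i) :
    PresentedGroup rels →* CyclicCoprod n :=
  PresentedGroup.toGroup (f := CyclicCoprod.gen n) <| by
    subst h
    rintro _ ⟨i, rfl⟩
    rw [map_pow, FreeGroup.lift_apply_of, CyclicCoprod.gen, ← map_pow, ofAdd_one_pow_self, map_one]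

lemma PresentedGroup.toCyclicCoprod_of (h : rels = Set.range fun i => FreeGroup.of i ^ n i)
    (i : ι) : PresentedGroup.toCyclicCoprod n h (.of i) = CyclicCoprod.gen n i :=
  PresentedGroup.toGroup.of _

lemma PresentedGroup.toCyclicCoprod_injective [∀ i, NeZero (n i)]
    (h : rels = Set.range fun i => FreeGroup.of i ^ n i) :
    Function.Injective (PresentedGroup.toCyclicCoprod n h) := by
  have hof : ∀ i, (PresentedGroup.of i : PresentedGroup rels) ^ n i = 1 := fun i =>
    PresentedGroup.one_of_mem (h ▸ ⟨i, rfl⟩)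
  let back : CyclicCoprod n →* PresentedGroup rels :=
    CoprodI.lift fun i => zmodPowHom (PresentedGroup.of i) (hof i)
  have : back.comp (PresentedGroup.toCyclicCoprod n h) = .id _ :=
    PresentedGroup.ext fun i => by
      simp [back, PresentedGroup.toCyclicCoprod_of, CyclicCoprod.gen, zmodPowHom_ofAdd_one]
  exact Function.LeftInverse.injective (DFunLike.congr_fun this)

end CyclicCoprod

open LinearAlgebra.Projectivization MatrixGroups

section ProjectiveLine

variable {K : Type*} [Field K]

def affinePt (z : K) : ℙ K (Fin 2 → K) := .mk K ![z, 1] (by simp)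

lemma affinePt_injective : Function.Injective (affinePt (K := K)) := by
  intro z w h
  obtain ⟨a, ha⟩ := (Projectivization.mk_eq_mk_iff' _ _ _ _ _).mp h
  have ha1 : a = 1 := by simpa using congrFun ha 1
  simpa [ha1] using (congrFun ha 0).symm

lemma mk_smul_affinePt (g : GL (Fin 2) K) (z : K) (hz : g 1 0 * z + g 1 1 ≠ 0) :
    (Matrix.ProjGenLinGroup.mk g : PGL(2, K)) • affinePt z =
      affinePt ((g 0 0 * z + g 0 1) / (g 1 0 * z + g 1 1)) := by
  rw [affinePt, Projectivization.PGL.mk_smul_mk, affinePt, Projectivization.mk_eq_mk_iff']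
  refine ⟨g 1 0 * z + g 1 1, ?_⟩
  ext i
  fin_cases i
  · simp only [Fin.zero_eta, Pi.smul_apply, Matrix.cons_val_zero, smul_eq_mul, Units.smul_def,
      Matrix.smul_eq_mulVec, Matrix.mulVec, dotProduct, Fin.sum_univ_two, Matrix.cons_val_one,
      Matrix.cons_val_fin_one, mul_one]
    field_simp
  · simp [Units.smul_def, Matrix.mulVec, dotProduct, Fin.sum_univ_two]

end ProjectiveLine

lemma Matrix.ProjGenLinGroup.mk_pow_eq_one_of_pow_eq_neg_one {n R : Type*} [Fintype n]
    [DecidableEq n] [CommRing R] {g : GL n R} {k : ℕ} (hg : (g : Matrix n n R) ^ k = -1) :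
    Matrix.ProjGenLinGroup.mk g ^ k = 1 := by
  rw [← map_pow, Matrix.ProjGenLinGroup.mk_eq_one,
    Matrix.GeneralLinearGroup.mem_center_iff_val_mem_range_scalar, Units.val_pow_eq_pow_val, hg]
  exact ⟨-1, by rw [map_neg, map_one]⟩

lemma Ms_pow_three : (!![0, 1; -1, 1] : Matrix (Fin 2) (Fin 2) ℂ) ^ 3 = -1 := by
  rw [pow_succ, pow_two, Matrix.mul_fin_two, Matrix.mul_fin_two, Matrix.eta_fin_two (-1)]
  simp

lemma Mt_pow_two : (!![0, 1; -1, 0] : Matrix (Fin 2) (Fin 2) ℂ) ^ 2 = -1 := by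
  rw [pow_two, Matrix.mul_fin_two, Matrix.eta_fin_two (-1)]
  simp

open Set Pointwise

lemma mk_Ms0_smul_affinePt {x : ℝ} (hx : x < 1) :
    Matrix.ProjGenLinGroup.mk Ms0 • affinePt (x : ℂ) = affinePt (((1 - x)⁻¹ : ℝ) : ℂ) := by
  have hx' : (1 : ℂ) - x ≠ 0 := by exact_mod_cast (sub_pos.2 hx).ne'
  rw [mk_smul_affinePt]
  · simp [Ms0, neg_add_eq_sub]
  · simpa [Ms0, neg_add_eq_sub] using hx'

lemma mk_Mt0_smul_affinePt {x : ℝ} (hx : x ≠ 0) :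
    Matrix.ProjGenLinGroup.mk Mt0 • affinePt (x : ℂ) = affinePt ((-x⁻¹ : ℝ) : ℂ) := by
  rw [mk_smul_affinePt]
  · simp [Mt0, inv_neg]
  · simpa [Mt0] using hx

def realAffinePts (S : Set ℝ) : Set (ℙ ℂ (Fin 2 → ℂ)) := (fun x : ℝ => affinePt (x : ℂ)) '' S

lemma realAffinePts_disjoint {S T : Set ℝ} (h : Disjoint S T) :
    Disjoint (realAffinePts S) (realAffinePts T) :=
  (Set.disjoint_image_iff (affinePt_injective.comp Complex.ofReal_injective)).2 h

lemma mk_Ms0_pow_smul_subset {k : ℕ} (hk0 : 0 < k) (hk : k < 3) :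
    Matrix.ProjGenLinGroup.mk Ms0 ^ k • realAffinePts (Iio 0) ⊆ realAffinePts (Ioi 0) := by
  rintro _ ⟨_, ⟨x, hx, rfl⟩, rfl⟩
  dsimp only
  have hx : x < 0 := hx
  interval_cases k
  · rw [pow_one, mk_Ms0_smul_affinePt (by linarith)]
    exact ⟨(1 - x)⁻¹, mem_Ioi.2 (inv_pos.2 (by linarith)), rfl⟩
  · have hy : (1 - x)⁻¹ < 1 := inv_lt_one_of_one_lt₀ (by linarith)
    rw [pow_two, mul_smul, mk_Ms0_smul_affinePt (by linarith), mk_Ms0_smul_affinePt hy]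
    exact ⟨(1 - (1 - x)⁻¹)⁻¹, mem_Ioi.2 (inv_pos.2 (by linarith)), rfl⟩

lemma mk_Mt0_smul_subset :
    Matrix.ProjGenLinGroup.mk Mt0 • realAffinePts (Ioi 0) ⊆ realAffinePts (Iio 0) := by
  rintro _ ⟨_, ⟨x, hx, rfl⟩, rfl⟩
  dsimp only
  have hx : 0 < x := hx
  rw [mk_Mt0_smul_affinePt hx.ne']
  exact ⟨_, neg_neg_of_pos (inv_pos.2 hx), rfl⟩

abbrev genOrders : Fin 2 → ℕ := ![3, 2]

instance (i : Fin 2) : NeZero (genOrders i) := ⟨by fin_cases i <;> simp⟩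

noncomputable def pglGens : Fin 2 → PGL(2, ℂ) :=
  ![Matrix.ProjGenLinGroup.mk Ms0, Matrix.ProjGenLinGroup.mk Mt0]

lemma pglGens_pow_genOrders (i : Fin 2) : pglGens i ^ genOrders i = 1 := by
  fin_cases i
  · exact Matrix.ProjGenLinGroup.mk_pow_eq_one_of_pow_eq_neg_one Ms_pow_three
  · exact Matrix.ProjGenLinGroup.mk_pow_eq_one_of_pow_eq_neg_one Mt_pow_two

noncomputable def cyclicCoprodToPGL : CyclicCoprod genOrders →* PGL(2, ℂ) :=
  CoprodI.lift fun i => zmodPowHom (pglGens i) (pglGens_pow_genOrders i)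

lemma cyclicCoprodToPGL_injective : Function.Injective cyclicCoprodToPGL := by
  refine CoprodI.lift_injective_of_ping_pong _ (.inr ⟨0, by simp [Cardinal.mk_fintype]⟩)
    ![realAffinePts (Ioi 0), realAffinePts (Iio 0)] (fun i => ?_) ?_ ?_
  · fin_cases i
    exacts [nonempty_Ioi.image _, nonempty_Iio.image _]
  · have h := realAffinePts_disjoint (Ioi_disjoint_Iio_same (a := (0 : ℝ)))
    intro i j hij
    fin_cases i <;> fin_cases j
    exacts [absurd rfl hij, h, h.symm, absurd rfl hij]
  · intro i j hij h hh
    obtain ⟨k, hk0, hkn, hk⟩ :=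
      exists_zmodPowHom_eq_pow_of_ne_one (pglGens i) (pglGens_pow_genOrders i) hh
    rw [hk]
    fin_cases i <;> fin_cases j
    · exact absurd rfl hij
    · exact mk_Ms0_pow_smul_subset hk0 hkn
    · obtain rfl : k = 1 := by change k < 2 at hkn; omega
      simpa [pglGens] using mk_Mt0_smul_subset
    · exact absurd rfl hij

lemma cyclicCoprodToPGL_gen (i : Fin 2) :
    cyclicCoprodToPGL (CyclicCoprod.gen genOrders i) = pglGens i := by
  rw [cyclicCoprodToPGL, CyclicCoprod.gen, CoprodI.lift_of, zmodPowHom_ofAdd_one]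

lemma hRels_eq : hRels = Set.range fun i => FreeGroup.of i ^ genOrders i := by
  ext r
  simp [hRels, Fin.exists_fin_two, eq_comm]

theorem stmt13 :
    ((!![0, 1; -1, 1] : Matrix (Fin 2) (Fin 2) ℂ) ^ 3 = -1 ∧
     (!![0, 1; -1, 0] : Matrix (Fin 2) (Fin 2) ℂ) ^ 2 = -1) ∧
    ∃ ρ : Hgrp →* PGL2,
      ρ hs = (QuotientGroup.mk Ms0 : PGL2) ∧
      ρ ht = (QuotientGroup.mk Mt0 : PGL2) ∧
      Function.Injective ρ := by
  -- `PGL(2, ℂ)` unfolds to `PGL2`, and `Matrix.ProjGenLinGroup.mk` to `QuotientGroup.mk`.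
  refine ⟨⟨Ms_pow_three, Mt_pow_two⟩,
    cyclicCoprodToPGL.comp (PresentedGroup.toCyclicCoprod genOrders hRels_eq), ?_, ?_,
    cyclicCoprodToPGL_injective.comp (PresentedGroup.toCyclicCoprod_injective genOrders hRels_eq)⟩
  · exact (congrArg cyclicCoprodToPGL (PresentedGroup.toCyclicCoprod_of genOrders hRels_eq 0)).trans
      (cyclicCoprodToPGL_gen 0)
  · exact (congrArg cyclicCoprodToPGL (PresentedGroup.toCyclicCoprod_of genOrders hRels_eq 1)).trans
      (cyclicCoprodToPGL_gen 1)
end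

section
/- There exists a subset D of ℂ \ {0}, dense in ℂ, such that for every A ∈ D the group homomorphism ρ_A : H → PGL(2,ℂ) is injective. Consequently, for such A the corresponding projective representation of PSL(2,ℤ) ≅ H given by these matrices is faithful. -/
/-- The matrix `!![0, A⁻¹; −A, 1]` as an element of `GL(2,ℂ)`, for `A ≠ 0`. -/
noncomputable def MsA (A : ℂ) (hA : A ≠ 0) : GL (Fin 2) ℂ :=
  Matrix.GeneralLinearGroup.mkOfDetNeZero !![0, A⁻¹; -A, 1]
    (by rw [Matrix.det_fin_two_of]; field_simp; norm_num)


/-!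
For `2 ≤ ‖A‖` the representation `ρ_A` is faithful by ping-pong on `ℙ¹(ℂ)`: `s` and `s²` map the
complement of the open unit disc into the disc, and `t` maps the disc into its complement.
For arbitrary `A`, the matrix representing `ρ_A(g)` is the specialization at `T = A` of a matrix
over `ℂ[T, T⁻¹]`, so `ρ_A(g) = 1` says that three Laurent polynomials vanish at `A`. If `g ≠ 1`,
one of them is nonzero because `ρ_2(g) ≠ 1`, so `ρ_A(g) = 1` only for finitely many `A`.
Since `H` is countable, the faithful parameters form a co-countable, hence dense, set.
-/

open scoped MatrixGroups LinearAlgebra.Projectivization Pointwise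
open Projectivization

def zmodLift {G : Type*} [Group G] {n : ℕ} (g : G) (hg : g ^ n = 1) :
    Multiplicative (ZMod n) →* G :=
  AddMonoidHom.toMultiplicativeLeft <| ZMod.lift n
    ⟨zmultiplesHom (Additive G) (.ofMul g), by simp [← ofMul_pow, hg]⟩

theorem zmodLift_ofAdd_natCast {G : Type*} [Group G] {n : ℕ} (g : G) (hg : g ^ n = 1) (k : ℕ) :
    zmodLift g hg (.ofAdd k) = g ^ k := by
  have h := ZMod.lift_coe n
    ⟨zmultiplesHom (Additive G) (.ofMul g), by simp [← ofMul_pow, hg]⟩ k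
  rw [Int.cast_natCast] at h
  simp [zmodLift, h, ← ofMul_pow]

namespace Hgrp

def genOrder : Fin 2 → ℕ := ![3, 2]

theorem of_pow_genOrder (i : Fin 2) : (PresentedGroup.of i : Hgrp) ^ genOrder i = 1 := by
  rw [PresentedGroup.of, ← map_pow]
  exact PresentedGroup.one_of_mem (by fin_cases i <;> simp [hRels, genOrder])

abbrev Factor (i : Fin 2) : Type := Multiplicative (ZMod (genOrder i))

def ofCoprod : Monoid.CoprodI Factor →* Hgrp :=
  Monoid.CoprodI.lift fun i => zmodLift _ (of_pow_genOrder i)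

theorem ofCoprod_surjective : Function.Surjective ofCoprod := by
  rw [← MonoidHom.range_eq_top, eq_top_iff, ← PresentedGroup.closure_range_of,
    Subgroup.closure_le]
  rintro _ ⟨i, rfl⟩
  refine ⟨Monoid.CoprodI.of (i := i) (.ofAdd (1 : ℕ)), ?_⟩
  rw [ofCoprod, Monoid.CoprodI.lift_of, zmodLift_ofAdd_natCast, pow_one]

theorem ofAdd_one_or_two_of_ne_one :
    ∀ h : Factor 0, h ≠ 1 → h = .ofAdd (1 : ℕ) ∨ h = .ofAdd (2 : ℕ) := by
  show ∀ h : Multiplicative (ZMod 3), h ≠ 1 → h = .ofAdd (1 : ℕ) ∨ h = .ofAdd (2 : ℕ)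
  decide

theorem eq_ofAdd_one_of_ne_one : ∀ h : Factor 1, h ≠ 1 → h = .ofAdd (1 : ℕ) := by
  show ∀ h : Multiplicative (ZMod 2), h ≠ 1 → h = .ofAdd (1 : ℕ)
  decide

theorem injective_of_pingPong {G α : Type*} [Group G] [MulAction G α] (ρ : Hgrp →* G)
    {X Y : Set α} (hX : X.Nonempty) (hY : Y.Nonempty) (hXY : Disjoint X Y)
    (hS : ρ hs • Y ⊆ X) (hS2 : ρ hs ^ 2 • Y ⊆ X) (hT : ρ ht • X ⊆ Y) :
    Function.Injective ρ := by
  let f i : Factor i →* G := ρ.comp (zmodLift _ (of_pow_genOrder i))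
  have hf : ρ.comp ofCoprod = Monoid.CoprodI.lift f := by
    ext i; simp [ofCoprod, f]
  have hf_ofAdd (i : Fin 2) (k : ℕ) : f i (.ofAdd k) = ρ (.of i) ^ k := by
    rw [MonoidHom.comp_apply, zmodLift_ofAdd_natCast, map_pow]
  have hcard : 3 ≤ Cardinal.mk (Factor 0) := by
    simp [Cardinal.mk_fintype, genOrder]
  have hpp : Pairwise fun i j =>
      ∀ h : Factor i, h ≠ 1 → f i h • ![X, Y] j ⊆ ![X, Y] i := by
    intro i j hij h hh
    match i, j with
    | 0, 0 | 1, 1 => exact absurd rfl hij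
    | 0, 1 =>
      obtain rfl | rfl := ofAdd_one_or_two_of_ne_one h hh
      · rw [hf_ofAdd, pow_one]; exact hS
      · rw [hf_ofAdd]; exact hS2
    | 1, 0 =>
      obtain rfl := eq_ofAdd_one_of_ne_one h hh
      rw [hf_ofAdd, pow_one]; exact hT
  refine Function.Injective.of_comp_right (g := ofCoprod) ?_ ofCoprod_surjective
  rw [← MonoidHom.coe_comp, hf]
  refine Monoid.CoprodI.lift_injective_of_ping_pong f (.inr ⟨0, hcard⟩) ![X, Y]
    (Fin.forall_fin_two.2 ⟨hX, hY⟩) ?_ hpp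
  intro i j hij
  fin_cases i <;> fin_cases j <;> simp_all [Function.onFun, hXY.symm]

end Hgrp

theorem neg_one_mem_center_GL {n R : Type*} [Fintype n] [DecidableEq n] [CommRing R] :
    (-1 : GL n R) ∈ Subgroup.center (GL n R) :=
  Subgroup.mem_center_iff.2 fun g => by simp

theorem mem_center_GL_fin_two_iff {R : Type*} [CommRing R] (g : GL (Fin 2) R) :
    g ∈ Subgroup.center (GL (Fin 2) R) ↔ g 0 1 = 0 ∧ g 1 0 = 0 ∧ g 0 0 = g 1 1 := by
  rw [Matrix.GeneralLinearGroup.center_eq_range_scalar]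
  constructor
  · rintro ⟨u, rfl⟩
    simp
  · rintro ⟨h01, h10, h00⟩
    have hdet : IsUnit (g 0 0 ^ 2) := by
      simpa [Matrix.det_fin_two, h01, h10, ← h00, sq] using g.isUnit.map Matrix.detMonoidHom
    refine ⟨((isUnit_pow_iff two_ne_zero).1 hdet).unit, ?_⟩
    ext i j
    fin_cases i <;> fin_cases j <;> simp [h01, h10, h00]

theorem MsA_pow_three (A : ℂ) (hA : A ≠ 0) : MsA A hA ^ 3 = -1 := by
  ext i j
  fin_cases i <;> fin_cases j <;>
    simp [MsA, pow_succ, Matrix.mul_apply, Fin.sum_univ_two, hA]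

theorem MsA_sq_val (A : ℂ) (hA : A ≠ 0) :
    ((MsA A hA ^ 2 : GL (Fin 2) ℂ) : Matrix (Fin 2) (Fin 2) ℂ) = !![-1, A⁻¹; -A, 0] := by
  ext i j
  fin_cases i <;> fin_cases j <;> simp [MsA, sq, Matrix.mul_apply, Fin.sum_univ_two, hA]

theorem Mt0_sq : Mt0 ^ 2 = -1 := by
  ext i j
  fin_cases i <;> fin_cases j <;> simp [Mt0, sq, Matrix.mul_apply, Fin.sum_univ_two]

theorem mk_pow_eq_one_of_pow_eq_neg_one {g : GL (Fin 2) ℂ} {n : ℕ} (hg : g ^ n = -1) :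
    (QuotientGroup.mk g : PGL2) ^ n = 1 := by
  rw [← QuotientGroup.mk_pow, hg, QuotientGroup.eq_one_iff]
  exact neg_one_mem_center_GL

noncomputable def rhoA (A : ℂ) (hA : A ≠ 0) : Hgrp →* PGL2 :=
  PresentedGroup.toGroup (f := ![QuotientGroup.mk (MsA A hA), QuotientGroup.mk Mt0]) <| by
    rintro r (rfl | rfl)
    · simpa using mk_pow_eq_one_of_pow_eq_neg_one (MsA_pow_three A hA)
    · simpa using mk_pow_eq_one_of_pow_eq_neg_one Mt0_sq

theorem rhoA_hs (A : ℂ) (hA : A ≠ 0) : rhoA A hA hs = QuotientGroup.mk (MsA A hA) :=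
  PresentedGroup.toGroup.of _

theorem rhoA_ht (A : ℂ) (hA : A ≠ 0) : rhoA A hA ht = QuotientGroup.mk Mt0 :=
  PresentedGroup.toGroup.of _

theorem eq_rhoA {A : ℂ} (hA : A ≠ 0) {ρ : Hgrp →* PGL2}
    (hρs : ρ hs = QuotientGroup.mk (MsA A hA)) (hρt : ρ ht = QuotientGroup.mk Mt0) :
    ρ = rhoA A hA :=
  PresentedGroup.ext <|
    Fin.forall_fin_two.2 ⟨hρs.trans (rhoA_hs A hA).symm, hρt.trans (rhoA_ht A hA).symm⟩

noncomputable instance : MulAction PGL2 (ℙ ℂ (Fin 2 → ℂ)) :=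
  inferInstanceAs (MulAction PGL(2, ℂ) _)

/-- The open unit disc `{[z : 1] : ‖z‖ < 1}` of `ℙ¹(ℂ)`; the defining inequality does not depend
on the chosen representative. -/
def unitDisc : Set (ℙ ℂ (Fin 2 → ℂ)) := {p | ‖p.rep 0‖ < ‖p.rep 1‖}

theorem mk_mem_unitDisc_iff {v : Fin 2 → ℂ} (hv : v ≠ 0) :
    mk ℂ v hv ∈ unitDisc ↔ ‖v 0‖ < ‖v 1‖ := by
  obtain ⟨a, ha⟩ := exists_smul_eq_mk_rep ℂ v hv
  simp [unitDisc, ← ha, Units.smul_def]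

theorem mk_smul_mk_mem_unitDisc_iff (g : GL (Fin 2) ℂ) {v : Fin 2 → ℂ} (hv : v ≠ 0) :
    (QuotientGroup.mk g : PGL2) • mk ℂ v hv ∈ unitDisc ↔
      ‖g 0 0 * v 0 + g 0 1 * v 1‖ < ‖g 1 0 * v 0 + g 1 1 * v 1‖ := by
  have h : (QuotientGroup.mk g : PGL2) • mk ℂ v hv =
      mk ℂ (g • v) (smul_ne_zero_iff_ne g |>.2 hv) :=
    rfl
  simp [h, mk_mem_unitDisc_iff, Units.smul_def]

theorem mk_smul_compl_unitDisc_subset (g : GL (Fin 2) ℂ)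
    (hg : ∀ x y : ℂ, x ≠ 0 → ‖y‖ ≤ ‖x‖ →
      ‖g 0 0 * x + g 0 1 * y‖ < ‖g 1 0 * x + g 1 1 * y‖) :
    (QuotientGroup.mk g : PGL2) • unitDiscᶜ ⊆ unitDisc := by
  refine Set.smul_set_subset_iff.2 fun p hp => ?_
  induction p using Projectivization.ind with | h v hv =>
  rw [Set.mem_compl_iff, mk_mem_unitDisc_iff, not_lt] at hp
  refine (mk_smul_mk_mem_unitDisc_iff g hv).2 (hg _ _ (fun h0 => hv ?_) hp)
  ext i
  fin_cases i
  · exact h0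
  · simpa [h0] using hp

theorem mk_smul_unitDisc_subset (g : GL (Fin 2) ℂ)
    (hg : ∀ x y : ℂ, ‖x‖ < ‖y‖ → ‖g 1 0 * x + g 1 1 * y‖ ≤ ‖g 0 0 * x + g 0 1 * y‖) :
    (QuotientGroup.mk g : PGL2) • unitDisc ⊆ unitDiscᶜ := by
  refine Set.smul_set_subset_iff.2 fun p hp => ?_
  induction p using Projectivization.ind with | h v hv =>
  rw [mk_mem_unitDisc_iff] at hp
  rw [Set.mem_compl_iff, mk_smul_mk_mem_unitDisc_iff, not_lt]
  exact hg _ _ hp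

section PingPong

variable {A : ℂ} (hA : A ≠ 0)

theorem rhoA_hs_smul_compl_unitDisc_subset (h2 : 2 ≤ ‖A‖) :
    rhoA A hA hs • unitDiscᶜ ⊆ unitDisc := by
  rw [rhoA_hs]
  refine mk_smul_compl_unitDisc_subset _ fun x y hx hyx => ?_
  simp only [MsA, Matrix.GeneralLinearGroup.val_mkOfDetNeZero, Matrix.of_apply,
    Matrix.cons_val', Matrix.cons_val_zero, Matrix.cons_val_one, Matrix.empty_val',
    Matrix.cons_val_fin_one, zero_mul, zero_add, one_mul, norm_mul, norm_inv, neg_mul]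
  have hx0 : 0 < ‖x‖ := norm_pos_iff.2 hx
  calc ‖A‖⁻¹ * ‖y‖ ≤ 2⁻¹ * ‖x‖ := by gcongr
    _ < ‖A‖ * ‖x‖ - ‖y‖ := by nlinarith
    _ = ‖A * x‖ - ‖y‖ := by rw [norm_mul]
    _ ≤ ‖-(A * x) + y‖ := by simpa using norm_sub_norm_le (-(A * x)) (-y)

theorem rhoA_hs_sq_smul_compl_unitDisc_subset (h2 : 2 ≤ ‖A‖) :
    rhoA A hA hs ^ 2 • unitDiscᶜ ⊆ unitDisc := by
  rw [rhoA_hs, ← QuotientGroup.mk_pow]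
  refine mk_smul_compl_unitDisc_subset _ fun x y hx hyx => ?_
  rw [MsA_sq_val]
  simp only [Matrix.of_apply, Matrix.cons_val', Matrix.cons_val_zero, Matrix.cons_val_one,
    Matrix.empty_val', Matrix.cons_val_fin_one, neg_mul, one_mul, zero_mul, add_zero, norm_neg,
    norm_mul]
  have hx0 : 0 < ‖x‖ := norm_pos_iff.2 hx
  calc ‖-x + A⁻¹ * y‖ ≤ ‖x‖ + ‖A‖⁻¹ * ‖y‖ := by
        simpa using norm_add_le (-x) (A⁻¹ * y)
    _ ≤ ‖x‖ + 2⁻¹ * ‖x‖ := by gcongr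
    _ < ‖A‖ * ‖x‖ := by nlinarith

theorem rhoA_ht_smul_unitDisc_subset : rhoA A hA ht • unitDisc ⊆ unitDiscᶜ := by
  rw [rhoA_ht]
  refine mk_smul_unitDisc_subset _ fun x y hxy => ?_
  simpa [Mt0] using hxy.le

theorem rhoA_injective (h2 : 2 ≤ ‖A‖) : Function.Injective (rhoA A hA) :=
  Hgrp.injective_of_pingPong _ ⟨mk ℂ ![0, 1] (by simp), by simp [mk_mem_unitDisc_iff]⟩
    ⟨mk ℂ ![1, 0] (by simp), by simp [mk_mem_unitDisc_iff]⟩ disjoint_compl_right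
    (rhoA_hs_smul_compl_unitDisc_subset hA h2) (rhoA_hs_sq_smul_compl_unitDisc_subset hA h2)
    (rhoA_ht_smul_unitDisc_subset hA)

end PingPong

section Laurent

open LaurentPolynomial

variable {K : Type*} [Field K]

noncomputable def laurentEval (a : K) (ha : a ≠ 0) : K[T;T⁻¹] →+* K :=
  eval₂ (RingHom.id K) (Units.mk0 a ha)

theorem finite_setOf_laurentEval_eq_zero {f : K[T;T⁻¹]} (hf : f ≠ 0) :
    {a : K | ∃ ha : a ≠ 0, laurentEval a ha f = 0}.Finite := by
  obtain ⟨n, p, hp⟩ := f.exists_T_pow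
  have hp0 : p ≠ 0 := by
    rintro rfl
    exact hf ((isUnit_T n).mul_left_eq_zero.1 (by simpa using hp.symm))
  refine (Polynomial.finite_setOfPred_isRoot hp0).subset fun a ⟨ha, hfa⟩ => ?_
  have h := congrArg (laurentEval a ha) hp
  rw [map_mul, hfa, zero_mul, laurentEval, eval₂_toLaurent] at h
  simpa using h

theorem finite_setOf_map_laurentEval_mem_center (M : GL (Fin 2) K[T;T⁻¹])
    {a₀ : K} (ha₀ : a₀ ≠ 0)
    (hM : Matrix.GeneralLinearGroup.map (laurentEval a₀ ha₀) M ∉ Subgroup.center _) :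
    {a : K | ∃ ha : a ≠ 0,
      Matrix.GeneralLinearGroup.map (laurentEval a ha) M ∈ Subgroup.center _}.Finite := by
  let zeros (f : K[T;T⁻¹]) := {a : K | ∃ ha : a ≠ 0, laurentEval a ha f = 0}
  have finite_zeros {f} (hf : laurentEval a₀ ha₀ f ≠ 0) : (zeros f).Finite :=
    finite_setOf_laurentEval_eq_zero fun h => hf (by rw [h, map_zero])
  simp only [mem_center_GL_fin_two_iff, Matrix.GeneralLinearGroup.map_apply,
    ← sub_eq_zero (b := laurentEval _ _ (M 1 1)), ← map_sub] at hM ⊢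
  refine Set.Finite.subset (s := zeros (M 0 1) ∩ (zeros (M 1 0) ∩ zeros (M 0 0 - M 1 1))) ?_
    fun a ⟨ha, h01, h10, h⟩ => ⟨⟨ha, h01⟩, ⟨ha, h10⟩, ⟨ha, h⟩⟩
  rcases not_and_or.1 hM with h | h
  · exact (finite_zeros h).inter_of_left _
  rcases not_and_or.1 h with h | h
  · exact ((finite_zeros h).inter_of_left _).inter_of_right _
  · exact ((finite_zeros h).inter_of_right _).inter_of_right _

end Laurent

section Generic

open LaurentPolynomial

noncomputable def laurentS : GL (Fin 2) ℂ[T;T⁻¹] :=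
  .mk'' !![0, T (-1); -T 1, 1] (by
    rw [Matrix.det_fin_two_of, zero_mul, zero_sub, mul_neg, neg_neg, ← T_add]; simp)

noncomputable def laurentT : GL (Fin 2) ℂ[T;T⁻¹] :=
  .mk'' !![0, 1; -1, 0] (by simp [Matrix.det_fin_two])

noncomputable def laurentRep : FreeGroup (Fin 2) →* GL (Fin 2) ℂ[T;T⁻¹] :=
  FreeGroup.lift ![laurentS, laurentT]

theorem map_laurentEval_laurentS (A : ℂ) (hA : A ≠ 0) :
    Matrix.GeneralLinearGroup.map (laurentEval A hA) laurentS = MsA A hA := by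
  ext i j
  fin_cases i <;> fin_cases j <;> simp [laurentS, MsA, laurentEval]

theorem map_laurentEval_laurentT (A : ℂ) (hA : A ≠ 0) :
    Matrix.GeneralLinearGroup.map (laurentEval A hA) laurentT = Mt0 := by
  ext i j
  fin_cases i <;> fin_cases j <;> simp [laurentT, Mt0]

theorem rhoA_mk (A : ℂ) (hA : A ≠ 0) (w : FreeGroup (Fin 2)) :
    rhoA A hA (PresentedGroup.mk hRels w) =
      QuotientGroup.mk (Matrix.GeneralLinearGroup.map (laurentEval A hA) (laurentRep w)) := by
  have h : (rhoA A hA).comp (PresentedGroup.mk hRels) = (QuotientGroup.mk' _).comp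
      ((Matrix.GeneralLinearGroup.map (laurentEval A hA)).comp laurentRep) := by
    refine FreeGroup.ext_hom _ _ (Fin.forall_fin_two.2 ⟨?_, ?_⟩)
    · simp only [MonoidHom.comp_apply, laurentRep, FreeGroup.lift_apply_of]
      exact (rhoA_hs A hA).trans (by simp [map_laurentEval_laurentS])
    · simp only [MonoidHom.comp_apply, laurentRep, FreeGroup.lift_apply_of]
      exact (rhoA_ht A hA).trans (by simp [map_laurentEval_laurentT])
  exact DFunLike.congr_fun h w

end Generic

theorem finite_setOf_rhoA_eq_one {g : Hgrp} (hg : g ≠ 1) :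
    {A : ℂ | ∃ hA : A ≠ 0, rhoA A hA g = 1}.Finite := by
  obtain ⟨w, rfl⟩ := PresentedGroup.mk_surjective hRels g
  simp only [rhoA_mk, QuotientGroup.eq_one_iff]
  refine finite_setOf_map_laurentEval_mem_center _ two_ne_zero ?_
  rw [← QuotientGroup.eq_one_iff, ← rhoA_mk]
  exact (map_ne_one_iff _ (rhoA_injective two_ne_zero (by norm_num))).2 hg

theorem dense_setOf_injective_rhoA :
    Dense {A : ℂ | ∃ hA : A ≠ 0, Function.Injective (rhoA A hA)} := by
  have : Countable Hgrp := (PresentedGroup.mk_surjective hRels).countable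
  have hbad : ({0} ∪ ⋃ g ∈ {g : Hgrp | g ≠ 1},
      {A : ℂ | ∃ hA : A ≠ 0, rhoA A hA g = 1}).Countable :=
    (Set.countable_singleton 0).union <|
      (Set.to_countable _).biUnion fun g hg => (finite_setOf_rhoA_eq_one hg).countable
  refine (hbad.dense_compl ℂ).mono fun A hA => ?_
  simp only [Set.mem_compl_iff, Set.mem_union, Set.mem_singleton_iff, Set.mem_iUnion, not_or,
    not_exists] at hA
  refine ⟨hA.1, (injective_iff_map_eq_one _).2 fun g hg => ?_⟩
  by_contra hg1
  exact hA.2 g hg1 ⟨hA.1, hg⟩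

theorem stmt15 :
    ∃ D : Set ℂ, (∀ A ∈ D, A ≠ 0) ∧ Dense D ∧
      ∀ (A : ℂ) (hA : A ≠ 0), A ∈ D →
        ∀ ρ : Hgrp →* PGL2,
          ρ hs = (QuotientGroup.mk (MsA A hA) : PGL2) →
          ρ ht = (QuotientGroup.mk Mt0 : PGL2) →
          Function.Injective ρ ∧
          ∀ e : PSL2Z ≃* Hgrp, Function.Injective (ρ.comp e.toMonoidHom) := by
  refine ⟨{A | ∃ hA : A ≠ 0, Function.Injective (rhoA A hA)}, fun A ⟨hA, _⟩ => hA,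
    dense_setOf_injective_rhoA, ?_⟩
  intro A hA hAD ρ hρs hρt
  obtain ⟨_, hinj⟩ := hAD
  obtain rfl := eq_rhoA hA hρs hρt
  exact ⟨hinj, fun e => hinj.comp e.injective⟩
end

section
/- The assignment σ1 ↦ (1 2), σ2 ↦ (2 3), σ3 ↦ (3 4) (transpositions in the symmetric group S4 on {1,2,3,4}) determines a well-defined group homomorphism perm : M04 → S4. Moreover, each of the permutations perm(a), perm(b), and perm(ab) moves the point 4, i.e., perm(a)(4) ≠ 4, perm(b)(4) ≠ 4, and perm(ab)(4) ≠ 4. -/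
/-!
The transpositions `(1 2), (2 3), (3 4)` satisfy the five defining relations of `M04`
(checked by evaluation in the finite group `S₄`), so they define a homomorphism out of the
presented group, unique because `σ1, σ2, σ3` generate. Then `perm a = (1 2)(3 4)`,
`perm b = (1 3)(2 4)` and `perm (ab) = (1 4)(2 3)` send `4` to `3`, `2` and `1`.
-/

open Equiv

def adjSwap (i : Fin 3) : Perm (Fin 4) := swap i.castSucc i.succ

theorem adjSwap_rels : ∀ r ∈ m4Rels, FreeGroup.lift adjSwap r = 1 := by
  rintro r (rfl | rfl | rfl | rfl | rfl) <;> simp only [map_mul, map_inv, map_pow,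
    FreeGroup.lift_apply_of] <;> decide

def m4Perm : M04 →* Perm (Fin 4) := PresentedGroup.toGroup adjSwap_rels

theorem m4Perm_of (i : Fin 3) : m4Perm (PresentedGroup.of i) = adjSwap i :=
  PresentedGroup.toGroup.of adjSwap_rels

theorem m4Perm_s1 : m4Perm m4s1 = swap 0 1 := m4Perm_of 0

theorem m4Perm_s2 : m4Perm m4s2 = swap 1 2 := m4Perm_of 1

theorem m4Perm_s3 : m4Perm m4s3 = swap 2 3 := m4Perm_of 2

theorem eq_m4Perm {p : M04 →* Perm (Fin 4)} (h1 : p m4s1 = swap 0 1)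
    (h2 : p m4s2 = swap 1 2) (h3 : p m4s3 = swap 2 3) : p = m4Perm := by
  refine PresentedGroup.ext fun i => ?_
  rw [m4Perm_of]
  fin_cases i
  exacts [h1, h2, h3]

theorem m4Perm_ea : m4Perm ea = swap 0 1 * swap 2 3 := by
  rw [ea, map_mul, map_inv, m4Perm_s1, m4Perm_s3, swap_inv]

theorem m4Perm_eb : m4Perm eb = swap 0 2 * swap 1 3 := by
  rw [eb, map_mul, map_mul, map_mul, map_inv, map_inv, m4Perm_s1, m4Perm_s2, m4Perm_s3]
  decide

theorem stmt16 :
    (∃! p : M04 →* Equiv.Perm (Fin 4),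
      p m4s1 = Equiv.swap 0 1 ∧ p m4s2 = Equiv.swap 1 2 ∧ p m4s3 = Equiv.swap 2 3) ∧
    ∀ p : M04 →* Equiv.Perm (Fin 4),
      p m4s1 = Equiv.swap 0 1 → p m4s2 = Equiv.swap 1 2 → p m4s3 = Equiv.swap 2 3 →
      p ea 3 ≠ 3 ∧ p eb 3 ≠ 3 ∧ p (ea * eb) 3 ≠ 3 := by
  refine ⟨⟨m4Perm, ⟨m4Perm_s1, m4Perm_s2, m4Perm_s3⟩,
    fun q ⟨h1, h2, h3⟩ => eq_m4Perm h1 h2 h3⟩, fun p h1 h2 h3 => ?_⟩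
  obtain rfl := eq_m4Perm h1 h2 h3
  rw [map_mul, m4Perm_ea, m4Perm_eb]
  decide
end

section
/- Let K be any group and Φ : M04 → K a group homomorphism such that the restriction of Φ to the subgroup G is injective and such that every element of the kernel of Φ lies in the kernel of perm (the homomorphism perm : M04 → S4 determined by σ1 ↦ (1 2), σ2 ↦ (2 3), σ3 ↦ (3 4)). Then Φ is injective. -/
/-!
The four elements `σ₁σ₂σ₃, σ₂σ₃, σ₃, 1` represent left cosets of `G`, and on generators one checks
that `M04` permutes these cosets exactly as `perm` permutes `{0, 1, 2, 3}` (a Schreier-type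
computation using the commutation, braid and `σ₁σ₂σ₃²σ₂σ₁ = 1` relations). As the representative
of `3` is `1`, every element fixing `3`, in particular every element of `ker perm`, lies in `G`.
Hence `ker Φ ≤ ker perm ≤ G`, and injectivity of `Φ` on `G` makes `ker Φ` trivial.
-/

local notation "σ₁" => m4s1
local notation "σ₂" => m4s2
local notation "σ₃" => m4s3

section CosetCompatible

variable {M X : Type*} [Group M] (ρ : M →* Equiv.Perm X) (H : Subgroup M) (t : X → M)

/-- The elements `x` with `x • (t i • H) = t (ρ x i) • H` for every `i`: when `t` is a transversal
of the cosets of `H`, these are the elements whose action on the cosets is read off `ρ`. -/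
def cosetCompatible : Subgroup M where
  carrier := {x | ∀ i, (t (ρ x i))⁻¹ * x * t i ∈ H}
  one_mem' i := by simp
  mul_mem' {x y} hx hy i := by
    simpa only [map_mul, Equiv.Perm.mul_apply, mul_assoc, mul_inv_cancel_left] using
      mul_mem (hx (ρ y i)) (hy i)
  inv_mem' {x} hx i := by
    have h := inv_mem (hx ((ρ x)⁻¹ i))
    simpa only [map_inv, Equiv.Perm.coe_inv, Equiv.apply_symm_apply, mul_inv_rev, inv_inv,
      mul_assoc] using h

variable {ρ H t}

theorem mem_cosetCompatible {x : M} :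
    x ∈ cosetCompatible ρ H t ↔ ∀ i, (t (ρ x i))⁻¹ * x * t i ∈ H :=
  Iff.rfl

theorem mem_of_mem_cosetCompatible {x : M} (hx : x ∈ cosetCompatible ρ H t) {i₀ : X}
    (ht : t i₀ = 1) (hfix : ρ x i₀ = i₀) : x ∈ H := by
  simpa [hfix, ht] using mem_cosetCompatible.mp hx i₀

end CosetCompatible

theorem m4s1_mul_m4s3 : σ₁ * σ₃ = σ₃ * σ₁ :=
  PresentedGroup.mk_eq_mk_of_mul_inv_mem (by simp [m4Rels])

theorem m4s1_braid : σ₁ * σ₂ * σ₁ = σ₂ * σ₁ * σ₂ :=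
  PresentedGroup.mk_eq_mk_of_mul_inv_mem (by simp [m4Rels])

theorem m4s3_braid : σ₃ * σ₂ * σ₃ = σ₂ * σ₃ * σ₂ :=
  PresentedGroup.mk_eq_mk_of_mul_inv_mem (by simp [m4Rels])

theorem m4s1_m4s2_m4s3_sq_m4s2_m4s1 : σ₁ * σ₂ * σ₃ ^ 2 * σ₂ * σ₁ = 1 :=
  PresentedGroup.one_of_mem (by simp [m4Rels])

theorem m4s1_mul_m4s1 : σ₁ * σ₁ = (σ₂ * σ₃ ^ 2 * σ₂)⁻¹ := by
  rw [eq_inv_iff_mul_eq_one]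
  calc σ₁ * σ₁ * (σ₂ * σ₃ ^ 2 * σ₂) = σ₁ * (σ₁ * σ₂ * σ₃ ^ 2 * σ₂ * σ₁) * σ₁⁻¹ := by group
    _ = 1 := by rw [m4s1_m4s2_m4s3_sq_m4s2_m4s1]; group

theorem m4s3_sq : σ₃ ^ 2 = (σ₂ * σ₁ * σ₁ * σ₂)⁻¹ := by
  rw [eq_inv_iff_mul_eq_one]
  calc σ₃ ^ 2 * (σ₂ * σ₁ * σ₁ * σ₂) = σ₂⁻¹ * σ₁⁻¹ * (σ₁ * σ₂ * σ₃ ^ 2 * σ₂ * σ₁) * σ₁ * σ₂ := by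
        group
    _ = 1 := by rw [m4s1_m4s2_m4s3_sq_m4s2_m4s1]; group

theorem m4s3_inv_mul_m4s1_mul_m4s3 : σ₃⁻¹ * σ₁ * σ₃ = σ₁ := by
  rw [mul_assoc, inv_mul_eq_iff_eq_mul, m4s1_mul_m4s3]

theorem m4s1_inv_mul_m4s3_mul_m4s1 : σ₁⁻¹ * σ₃ * σ₁ = σ₃ := by
  rw [mul_assoc, inv_mul_eq_iff_eq_mul, m4s1_mul_m4s3]

theorem m4s1_m4s2_inv_mul_m4s2_mul_m4s1_m4s2 : (σ₁ * σ₂)⁻¹ * σ₂ * (σ₁ * σ₂) = σ₁ := by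
  rw [mul_assoc, inv_mul_eq_iff_eq_mul, m4s1_braid, mul_assoc]

theorem m4s2_m4s3_inv_mul_m4s3_mul_m4s2_m4s3 : (σ₂ * σ₃)⁻¹ * σ₃ * (σ₂ * σ₃) = σ₂ := by
  rw [mul_assoc, inv_mul_eq_iff_eq_mul, ← m4s3_braid, mul_assoc]

theorem m4s3_inv_mul_m4s2_mul_m4s3 : σ₃⁻¹ * σ₂ * σ₃ = σ₂ * σ₃ * σ₂⁻¹ := by
  rw [mul_assoc, inv_mul_eq_iff_eq_mul, ← mul_assoc, ← mul_assoc, eq_mul_inv_iff_mul_eq,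
    m4s3_braid]

theorem m4s1_mem_Gsub : σ₁ ∈ Gsub := Subgroup.subset_closure (by simp)

theorem m4s2_mem_Gsub : σ₂ ∈ Gsub := Subgroup.subset_closure (by simp)

theorem m4s3_sq_mem_Gsub : σ₃ ^ 2 ∈ Gsub := by
  rw [m4s3_sq]
  apply_rules [mul_mem, inv_mem, m4s1_mem_Gsub, m4s2_mem_Gsub]

theorem sq_m4s3_inv_mul_m4s2_mul_m4s3_mem_Gsub : (σ₃⁻¹ * σ₂ * σ₃) ^ 2 ∈ Gsub := by
  rw [m4s3_inv_mul_m4s2_mul_m4s3, conj_pow]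
  apply_rules [mul_mem, inv_mem, m4s2_mem_Gsub, m4s3_sq_mem_Gsub]

/-- `cosetRep i` moves the point `3` to `i` under `σ₁ ↦ (0 1), σ₂ ↦ (1 2), σ₃ ↦ (2 3)`. -/
def cosetRep : Fin 4 → M04 := ![σ₁ * σ₂ * σ₃, σ₂ * σ₃, σ₃, 1]

theorem m4s1_mem_cosetCompatible {perm : M04 →* Equiv.Perm (Fin 4)}
    (hp : perm σ₁ = Equiv.swap 0 1) : σ₁ ∈ cosetCompatible perm Gsub cosetRep := by
  rw [mem_cosetCompatible, hp]
  intro i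
  fin_cases i <;> simp only [cosetRep, Fin.zero_eta, Fin.mk_one, Fin.reduceFinMk,
    Equiv.swap_apply_def, Fin.reduceEq, ↓reduceIte, Matrix.cons_val]
  · have h : (σ₂ * σ₃)⁻¹ * σ₁ * (σ₁ * σ₂ * σ₃) = ((σ₃⁻¹ * σ₂ * σ₃) ^ 2)⁻¹ * (σ₃ ^ 2)⁻¹ :=
      calc _ = σ₃⁻¹ * σ₂⁻¹ * (σ₁ * σ₁) * σ₂ * σ₃ := by group
        _ = _ := by rw [m4s1_mul_m4s1]; simp only [sq]; group
    rw [h]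
    exact mul_mem (inv_mem sq_m4s3_inv_mul_m4s2_mul_m4s3_mem_Gsub) (inv_mem m4s3_sq_mem_Gsub)
  · simp [mul_assoc]
  · simpa [m4s3_inv_mul_m4s1_mul_m4s3] using m4s1_mem_Gsub
  · simpa using m4s1_mem_Gsub

theorem m4s2_mem_cosetCompatible {perm : M04 →* Equiv.Perm (Fin 4)}
    (hp : perm σ₂ = Equiv.swap 1 2) : σ₂ ∈ cosetCompatible perm Gsub cosetRep := by
  rw [mem_cosetCompatible, hp]
  intro i
  fin_cases i <;> simp only [cosetRep, Fin.zero_eta, Fin.mk_one, Fin.reduceFinMk,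
    Equiv.swap_apply_def, Fin.reduceEq, ↓reduceIte, Matrix.cons_val]
  · rw [show (σ₁ * σ₂ * σ₃)⁻¹ * σ₂ * (σ₁ * σ₂ * σ₃)
        = σ₃⁻¹ * ((σ₁ * σ₂)⁻¹ * σ₂ * (σ₁ * σ₂)) * σ₃ by group,
      m4s1_m4s2_inv_mul_m4s2_mul_m4s1_m4s2, m4s3_inv_mul_m4s1_mul_m4s3]
    exact m4s1_mem_Gsub
  · rw [show σ₃⁻¹ * σ₂ * (σ₂ * σ₃) = (σ₃⁻¹ * σ₂ * σ₃) ^ 2 by simp only [sq]; group]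
    exact sq_m4s3_inv_mul_m4s2_mul_m4s3_mem_Gsub
  · simp [mul_assoc]
  · simpa using m4s2_mem_Gsub

theorem m4s3_mem_cosetCompatible {perm : M04 →* Equiv.Perm (Fin 4)}
    (hp : perm σ₃ = Equiv.swap 2 3) : σ₃ ∈ cosetCompatible perm Gsub cosetRep := by
  rw [mem_cosetCompatible, hp]
  intro i
  fin_cases i <;> simp only [cosetRep, Fin.zero_eta, Fin.mk_one, Fin.reduceFinMk,
    Equiv.swap_apply_def, Fin.reduceEq, ↓reduceIte, Matrix.cons_val]
  · rw [show (σ₁ * σ₂ * σ₃)⁻¹ * σ₃ * (σ₁ * σ₂ * σ₃)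
        = (σ₂ * σ₃)⁻¹ * (σ₁⁻¹ * σ₃ * σ₁) * (σ₂ * σ₃) by group,
      m4s1_inv_mul_m4s3_mul_m4s1, m4s2_m4s3_inv_mul_m4s3_mul_m4s2_m4s3]
    exact m4s2_mem_Gsub
  · rw [m4s2_m4s3_inv_mul_m4s3_mul_m4s2_m4s3]
    exact m4s2_mem_Gsub
  · simpa [← sq] using m4s3_sq_mem_Gsub
  · simp

theorem stmt17 (perm : M04 →* Equiv.Perm (Fin 4))
    (hp1 : perm m4s1 = Equiv.swap 0 1) (hp2 : perm m4s2 = Equiv.swap 1 2)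
    (hp3 : perm m4s3 = Equiv.swap 2 3)
    {K : Type*} [Group K] (Φ : M04 →* K)
    (hG : Function.Injective fun x : Gsub => Φ x)
    (hker : ∀ x : M04, x ∈ Φ.ker → x ∈ perm.ker) :
    Function.Injective Φ := by
  have hcompat (x : M04) : x ∈ cosetCompatible perm Gsub cosetRep := by
    refine PresentedGroup.generated_by _ _ (fun k => ?_) x
    fin_cases k
    exacts [m4s1_mem_cosetCompatible hp1, m4s2_mem_cosetCompatible hp2,
      m4s3_mem_cosetCompatible hp3]
  rw [injective_iff_map_eq_one]
  intro x hx
  have hxG : x ∈ Gsub := mem_of_mem_cosetCompatible (hcompat x) (i₀ := 3) rfl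
    (by rw [hker x hx, Equiv.Perm.one_apply])
  simpa using hG (a₁ := ⟨x, hxG⟩) (a₂ := 1) (by simpa using hx)
end
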